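/- Let (n,m,k,l) be natural numbers with m ≤ n−m, k ≤ n, m+k−n ≤ l and l ≤ min(m,k). Then ∑_{x=0}^{m} p(x | n,m,k,l) = 1, where p(x | n,m,k,l) is the explicit Racah-presentation expression. In particular the values p(x | n,m,k,l) for 0 ≤ x ≤ m sum to one. -/

import Mathlib

open Finset

/-- Rising factorial `(a)_r = a(a+1)⋯(a+r−1)` in `ℚ`. -/
noncomputable def risingFac (a : ℚ) (r : ℕ) : ℚ := ∏ j ∈ Finset.range r, (a + j)

/-- The terminating `₄F₃`-hypergeometric (Racah polynomial) sum
`∑_{r=0}^{min(x,M,N)} ((−x)_r (x−n−1)_r (−M)_r (−N)_r)/(r! (−m)_r (m−n)_r (−M−N)_r)`. -/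
noncomputable def racahSum (n m M N x : ℕ) : ℚ :=
  ∑ r ∈ Finset.range (min x (min M N) + 1),
    risingFac (-(x : ℚ)) r * risingFac ((x : ℚ) - n - 1) r * risingFac (-(M : ℚ)) r *
        risingFac (-(N : ℚ)) r /
      ((r.factorial : ℚ) * risingFac (-(m : ℚ)) r * risingFac ((m : ℚ) - n) r *
        risingFac (-((M : ℚ) + N)) r)

/-- The explicit Racah-presentation probability mass function `p(x | n,m,k,l)`,
with `M := m−l` and `N := n−m−k+l` (realized as `n+l-m-k` in `ℕ`). -/
noncomputable def racahPMF (n m k l x : ℕ) : ℚ :=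
  ((n - k).choose (m - l) : ℚ) * ((n.choose x : ℚ) / (n.choose m : ℚ)) *
    (((n : ℚ) - 2 * x + 1) / ((n : ℚ) - x + 1)) *
    racahSum n m (m - l) (n + l - m - k) x

/-! Expand the Racah sum in `r` and exchange the two summations. The weight
`C(n,x) (n-2x+1)/(n-x+1)` is the difference `C(n,x) - C(n,x-1)`, and against it the partial sums
over `x ≤ m` of `(-x)_r (x-n-1)_r` telescope to `C(n,m) (-m)_r (m-n)_r`, which cancels the
corresponding factors of the denominator. What remains,
`C(M+N,M) ∑_r (-M)_r (-N)_r / (r! (-M-N)_r)`, is the Chu–Vandermonde sum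
`∑_r (-1)^r C(N,r) C(M+N-r,N) = 1`. -/

lemma risingFac_succ (a : ℚ) (r : ℕ) : risingFac a (r + 1) = risingFac a r * (a + r) :=
  prod_range_succ _ _

lemma risingFac_succ' (a : ℚ) (r : ℕ) : risingFac a (r + 1) = a * risingFac (a + 1) r := by
  simp only [risingFac, prod_range_succ', Nat.cast_add, Nat.cast_one, Nat.cast_zero, add_zero]
  rw [mul_comm]
  congr 1
  exact prod_congr rfl fun j _ => by ring

lemma risingFac_eq_eval_ascPochhammer (a : ℚ) (r : ℕ) :
    risingFac a r = (ascPochhammer ℚ r).eval a := by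
  induction r with
  | zero => simp [risingFac]
  | succ r ih => rw [risingFac_succ, ih, ascPochhammer_succ_eval]

lemma risingFac_neg_natCast (a r : ℕ) :
    risingFac (-(a : ℚ)) r = (-1) ^ r * r.factorial * a.choose r := by
  rw [risingFac_eq_eval_ascPochhammer, ascPochhammer_eval_neg_eq_descPochhammer,
    descPochhammer_eval_eq_descFactorial, Nat.descFactorial_eq_factorial_mul_choose]
  push_cast
  ring

lemma risingFac_neg_natCast_ne_zero {a r : ℕ} (h : r ≤ a) : risingFac (-(a : ℚ)) r ≠ 0 := by
  rw [risingFac_neg_natCast]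
  have := Nat.choose_pos h
  positivity

lemma risingFac_natCast_sub_ne_zero {m n r : ℕ} (h : m + r ≤ n) :
    risingFac ((m : ℚ) - n) r ≠ 0 := by
  rw [show (m : ℚ) - n = -((n - m : ℕ) : ℚ) by push_cast [Nat.cast_sub (by omega : m ≤ n)]; ring]
  exact risingFac_neg_natCast_ne_zero (by omega)

-- Compare the coefficients of `X ^ N` in `X ^ N * (X + 1) ^ M = ((X + 1) - 1) ^ N * (X + 1) ^ M`.
open Polynomial in
theorem alternating_sum_choose_mul_choose_add_sub (M N : ℕ) :
    ∑ r ∈ range (N + 1), (-1 : ℤ) ^ r * N.choose r * (M + N - r).choose N = 1 := by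
  have h : (X ^ N * (X + 1) ^ M : ℤ[X]) =
      ∑ r ∈ range (N + 1), C ((-1 : ℤ) ^ r * N.choose r) * (X + 1) ^ (M + N - r) := by
    have := add_pow (-1 : ℤ[X]) (X + 1) N
    rw [show (-1 + (X + 1) : ℤ[X]) = X by ring] at this
    rw [this, sum_mul]
    refine sum_congr rfl fun r hr => ?_
    rw [show M + N - r = N - r + M by have := mem_range.1 hr; omega, pow_add]
    simp only [map_mul, map_pow, map_neg, map_one, map_natCast]
    ring
  have := congrArg (coeff · N) h
  simp only [finsetSum_coeff, coeff_C_mul, coeff_X_add_one_pow] at this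
  rw [← this, ← zero_add N, coeff_X_pow_mul', if_pos le_rfl, Nat.sub_self, coeff_X_add_one_pow]
  simp

lemma choose_mul_risingFac_div_eq {M N r : ℕ} (hr : r ≤ M) :
    ((M + N).choose M : ℚ) * (risingFac (-(M : ℚ)) r * risingFac (-(N : ℚ)) r /
      (r.factorial * risingFac (-((M : ℚ) + N)) r)) =
        (-1) ^ r * N.choose r * (M + N - r).choose N := by
  have hchoose : (M + N).choose M * M.choose r = (M + N).choose r * (M + N - r).choose N := by
    rw [Nat.choose_mul hr, ← Nat.choose_symm_of_eq_add (by omega : M + N - r = M - r + N)]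
  have hpos : 0 < (M + N).choose r := Nat.choose_pos (by omega)
  rw [show -((M : ℚ) + N) = -((M + N : ℕ) : ℚ) by push_cast; ring]
  simp only [risingFac_neg_natCast]
  field_simp
  have : ((M + N).choose M * M.choose r : ℚ) = (M + N).choose r * (M + N - r).choose N := by
    exact_mod_cast hchoose
  rw [this]
  ring

theorem choose_mul_sum_risingFac_div_eq_one (M N : ℕ) :
    ((M + N).choose M : ℚ) * ∑ r ∈ range (min M N + 1), risingFac (-(M : ℚ)) r *
      risingFac (-(N : ℚ)) r / (r.factorial * risingFac (-((M : ℚ) + N)) r) = 1 := by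
  rw [mul_sum, sum_congr rfl fun r hr => choose_mul_risingFac_div_eq (by
    have := mem_range.1 hr; omega)]
  have hvanish : ∀ r ∈ range (N + 1), r ∉ range (min M N + 1) →
      (-1 : ℚ) ^ r * N.choose r * (M + N - r).choose N = 0 := by
    intro r hr hr'
    simp only [mem_range] at hr hr'
    rw [Nat.choose_eq_zero_of_lt (by omega : M + N - r < N)]
    simp
  rw [sum_subset (range_subset_range.2 (by omega)) hvanish]
  exact_mod_cast alternating_sum_choose_mul_choose_add_sub M N

lemma cast_choose_succ_mul {n x : ℕ} (h : x ≤ n) :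
    (n.choose (x + 1) : ℚ) * (x + 1) = n.choose x * (n - x) := by
  have := congrArg (Nat.cast (R := ℚ)) (Nat.choose_succ_right_eq n x)
  push_cast [Nat.cast_sub h] at this
  exact this

lemma choose_succ_mul_div_eq_sub {n x : ℕ} (h : x < n) :
    (n.choose (x + 1) : ℚ) * ((n - 2 * ((x + 1 : ℕ) : ℚ) + 1) / (n - ((x + 1 : ℕ) : ℚ) + 1)) =
      n.choose (x + 1) - n.choose x := by
  have hpos : (0 : ℚ) < n - x := by rw [sub_pos]; exact_mod_cast h
  push_cast
  rw [show (n : ℚ) - (x + 1) + 1 = n - x by ring]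
  field_simp
  linear_combination (-1) * cast_choose_succ_mul h.le

theorem sum_choose_mul_div_mul_risingFac {n m : ℕ} (hm : m ≤ n) (r : ℕ) :
    ∑ x ∈ range (m + 1), (n.choose x : ℚ) * ((n - 2 * x + 1) / (n - x + 1)) *
        (risingFac (-(x : ℚ)) r * risingFac ((x : ℚ) - n - 1) r) =
      n.choose m * risingFac (-(m : ℚ)) r * risingFac ((m : ℚ) - n) r := by
  induction m with
  | zero =>
    cases r with
    | zero => simp [risingFac, div_self (by positivity : (n : ℚ) + 1 ≠ 0)]
    | succ r => simp [risingFac_succ']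
  | succ m ih =>
    rw [sum_range_succ, ih (by omega), choose_succ_mul_div_eq_sub (by omega)]
    have hrec := cast_choose_succ_mul (show m ≤ n by omega)
    push_cast
    rw [show (m : ℚ) + 1 - n - 1 = m - n by ring]
    cases r with
    | zero => simp [risingFac]
    | succ r =>
      have h₁ : risingFac (-(m : ℚ)) (r + 1) = risingFac (-m) r * (-m + r) := risingFac_succ _ _
      have h₂ : risingFac (-((m : ℚ) + 1)) (r + 1) = -(m + 1) * risingFac (-m) r := by
        rw [risingFac_succ', neg_add, neg_add_cancel_right]
      have h₃ : risingFac ((m : ℚ) - n) (r + 1) = (m - n) * risingFac (m - n + 1) r :=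
        risingFac_succ' _ _
      have h₄ : risingFac ((m : ℚ) + 1 - n) (r + 1) =
          risingFac (m - n + 1) r * (m - n + 1 + r) := by
        rw [add_sub_right_comm, risingFac_succ]
      rw [h₁, h₂, h₃, h₄]
      linear_combination ((r + 1) * risingFac (-m) r * risingFac (m - n + 1) r : ℚ) * hrec

noncomputable def racahCoeff (n m M N r : ℕ) : ℚ :=
  risingFac (-(M : ℚ)) r * risingFac (-(N : ℚ)) r /
    (r.factorial * risingFac (-(m : ℚ)) r * risingFac ((m : ℚ) - n) r *
      risingFac (-((M : ℚ) + N)) r)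

lemma racahSum_eq_sum_racahCoeff (n m M N x : ℕ) :
    racahSum n m M N x = ∑ r ∈ range (min M N + 1),
      risingFac (-(x : ℚ)) r * risingFac ((x : ℚ) - n - 1) r * racahCoeff n m M N r := by
  have hvanish : ∀ r ∈ range (min M N + 1), r ∉ range (min x (min M N) + 1) →
      risingFac (-(x : ℚ)) r * risingFac ((x : ℚ) - n - 1) r * racahCoeff n m M N r = 0 := by
    intro r hr hr'
    simp only [mem_range] at hr hr'
    simp [risingFac_neg_natCast, Nat.choose_eq_zero_of_lt (by omega : x < r)]
  rw [racahSum, ← sum_subset (range_subset_range.2 (by omega)) hvanish]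
  exact sum_congr rfl fun r _ => by rw [racahCoeff]; ring

theorem sum_choose_mul_div_mul_racahSum {n m M N : ℕ} (hMm : M ≤ m) (hmM : m + M ≤ n) :
    ∑ x ∈ range (m + 1), (n.choose x : ℚ) * ((n - 2 * x + 1) / (n - x + 1)) * racahSum n m M N x =
      n.choose m * ∑ r ∈ range (min M N + 1), risingFac (-(M : ℚ)) r *
        risingFac (-(N : ℚ)) r / (r.factorial * risingFac (-((M : ℚ) + N)) r) := by
  simp_rw [racahSum_eq_sum_racahCoeff, mul_sum]
  rw [sum_comm]
  refine sum_congr rfl fun r hr => ?_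
  have hrM : r ≤ M := by have := mem_range.1 hr; omega
  have hm : risingFac (-(m : ℚ)) r ≠ 0 := risingFac_neg_natCast_ne_zero (by omega)
  have hmn : risingFac ((m : ℚ) - n) r ≠ 0 := risingFac_natCast_sub_ne_zero (by omega)
  calc _ = (∑ x ∈ range (m + 1), (n.choose x : ℚ) * ((n - 2 * x + 1) / (n - x + 1)) *
          (risingFac (-(x : ℚ)) r * risingFac ((x : ℚ) - n - 1) r)) * racahCoeff n m M N r := by
        rw [sum_mul]
        exact sum_congr rfl fun x _ => by ring
    _ = _ := by
        rw [sum_choose_mul_div_mul_risingFac (by omega), racahCoeff]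
        field_simp

theorem sum_choose_div_mul_racahSum_eq_one {n m M N : ℕ} (hMm : M ≤ m) (hmM : m + M ≤ n) :
    ∑ x ∈ range (m + 1), ((M + N).choose M : ℚ) * (n.choose x / n.choose m) *
      ((n - 2 * x + 1) / (n - x + 1)) * racahSum n m M N x = 1 := by
  have hCnm : (n.choose m : ℚ) ≠ 0 := by exact_mod_cast (Nat.choose_pos (by omega)).ne'
  calc _ = (M + N).choose M / n.choose m * ∑ x ∈ range (m + 1),
          (n.choose x : ℚ) * ((n - 2 * x + 1) / (n - x + 1)) * racahSum n m M N x := by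
        rw [mul_sum]
        exact sum_congr rfl fun x _ => by ring
    _ = 1 := by
        rw [sum_choose_mul_div_mul_racahSum hMm hmM, ← choose_mul_sum_risingFac_div_eq_one M N]
        field_simp

theorem racahPMF_sum_eq_one_general (n m k l : ℕ) (hm : 2 * m ≤ n)
    (hl : m + k ≤ n + l) (hlm : l ≤ m) :
    ∑ x ∈ Finset.range (m + 1), racahPMF n m k l x = 1 := by
  have hMN : n - k = (m - l) + (n + l - m - k) := by omega
  simp only [racahPMF, hMN]
  exact sum_choose_div_mul_racahSum_eq_one (by omega) (by omega)

/-- **Total mass one**: the Racah-presentation pmf values `p(x | n,m,k,l)` for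
`0 ≤ x ≤ m` sum to one. -/
theorem racahPMF_sum_eq_one (n m k l : ℕ) (hm : 2 * m ≤ n) (hk : k ≤ n)
    (hl : m + k ≤ n + l) (hlm : l ≤ m) (hlk : l ≤ k) :
    ∑ x ∈ Finset.range (m + 1), racahPMF n m k l x = 1 :=
  racahPMF_sum_eq_one_general n m k l hm hl hlm
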